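/- Translation of anti-strategies (Theorem 9.6(ii), classically valid form): let φ : (List ℕ → Bool) → (ℕ → ℕ) be continuous (product topologies of discrete spaces) and suppose that for every τ : List ℕ → Bool, φ τ lies in (ω×2)^ω and φ τ II-obeys τ. Then there exists σ : List ℕ → ℕ such that every δ in (ω×2)^ω that I-obeys σ is of the form φ τ for some τ : List ℕ → Bool. -/

import Mathlib

/-!
Call a finite position `s` *flexible* for `φ` if, however player II's strategy is prescribed
on the odd-length positions extending `s`, some `τ` with that prescription has `φ τ` passing
through `s`. The empty position is flexible (take `τ := f`). At a flexible position of even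
length player I can find a move `m` after which both replies of II leave the position
flexible: otherwise, for each `m` choose a bad reply `b m` and a prescription `f m` witnessing
the failure, and glue them into one prescription answering `s ++ [m]` by `b m` and continuing
by `f m`; the `τ` it provides then contradicts the choice of `f m` for `m := φ τ |s|`.
Player I's strategy plays such a move. Every play `δ` obeying it is a limit of plays
`φ τₙ`, and since `List ℕ → Bool` is compact the range of `φ` is closed, so `δ = φ τ`.
-/

/-- The first `n` values of `δ` as a list. -/
def segN (δ : ℕ → ℕ) (n : ℕ) : List ℕ := List.ofFn fun i : Fin n => δ i

/-- `δ` is a member of `(ω×2)^ω`: at odd indices only bits are played. -/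
def MemOmegaTwo (δ : ℕ → ℕ) : Prop := ∀ n, δ (2 * n + 1) ≤ 1

/-- `δ` I-obeys the strategy `σ` for player I. -/
def ObeysI (δ : ℕ → ℕ) (σ : List ℕ → ℕ) : Prop :=
  ∀ n, δ (2 * n) = σ (segN δ (2 * n))

/-- `δ` II-obeys the strategy `τ` for player II. -/
def ObeysII (δ : ℕ → ℕ) (τ : List ℕ → Bool) : Prop :=
  ∀ n, δ (2 * n + 1) = if τ (segN δ (2 * n + 1)) then 1 else 0

@[simp]
lemma length_segN (δ : ℕ → ℕ) (n : ℕ) : (segN δ n).length = n := by simp [segN]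

lemma segN_succ (δ : ℕ → ℕ) (n : ℕ) : segN δ (n + 1) = segN δ n ++ [δ n] := by
  rw [segN, List.ofFn_succ', List.concat_eq_append]
  rfl

lemma segN_eq_segN_iff {x y : ℕ → ℕ} {n : ℕ} : segN x n = segN y n ↔ ∀ i < n, x i = y i := by
  simp [segN, List.ofFn_inj, funext_iff, Fin.forall_iff]

lemma ObeysII.segN_two_mul_add_two {δ : ℕ → ℕ} {τ : List ℕ → Bool} (h : ObeysII δ τ)
    (n : ℕ) :
    segN δ (2 * n + 2) =
      segN δ (2 * n) ++ [δ (2 * n), if τ (segN δ (2 * n) ++ [δ (2 * n)]) then 1 else 0] := by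
  rw [segN_succ, segN_succ, h n, segN_succ]
  simp

lemma ObeysI.segN_two_mul_add_two {δ : ℕ → ℕ} {σ : List ℕ → ℕ} (h : ObeysI δ σ)
    (hδ : MemOmegaTwo δ) (n : ℕ) :
    segN δ (2 * n + 2) =
      segN δ (2 * n) ++ [σ (segN δ (2 * n)), if decide (δ (2 * n + 1) = 1) then 1 else 0] := by
  have hbit : (if decide (δ (2 * n + 1) = 1) then 1 else 0) = δ (2 * n + 1) := by
    have := hδ n
    interval_cases δ (2 * n + 1) <;> rfl
  rw [hbit, ← h n, segN_succ, segN_succ]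
  simp

lemma mem_range_of_forall_exists_agree {X α : Type*} [TopologicalSpace X] [CompactSpace X]
    [TopologicalSpace α] [DiscreteTopology α] {φ : X → ℕ → α} (hφ : Continuous φ)
    {δ : ℕ → α} (h : ∀ n, ∃ x, ∀ i < n, φ x i = δ i) : δ ∈ Set.range φ := by
  choose x hx using h
  have hlim : Filter.Tendsto (fun n => φ (x n)) Filter.atTop (nhds δ) := by
    refine tendsto_pi_nhds.mpr fun i => tendsto_nhds_of_eventually_eq ?_
    filter_upwards [Filter.eventually_gt_atTop i] with n hn using hx n i hn
  exact (isCompact_range hφ).isClosed.mem_of_tendsto hlim (.of_forall fun n => ⟨x n, rfl⟩)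

section Flexible

variable (φ : (List ℕ → Bool) → ℕ → ℕ)

def Flexible (s : List ℕ) : Prop :=
  ∀ f : List ℕ → Bool, ∃ τ : List ℕ → Bool,
    segN (φ τ) s.length = s ∧ ∀ u, s <+: u → Odd u.length → τ u = f u

open Classical in
noncomputable def flexibleMove (s : List ℕ) : ℕ :=
  if h : ∃ m, ∀ b : Bool, Flexible φ (s ++ [m, if b then 1 else 0]) then h.choose else 0

variable {φ}

lemma flexible_nil : Flexible φ [] := fun f => ⟨f, by simp [segN], fun _ _ _ => rfl⟩

lemma Flexible.exists_segN_eq {s : List ℕ} (h : Flexible φ s) :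
    ∃ τ, segN (φ τ) s.length = s :=
  (h fun _ => false).imp fun _ => And.left

lemma Flexible.exists_move (hobey : ∀ τ, ObeysII (φ τ) τ) {s : List ℕ} {n : ℕ}
    (hs : s.length = 2 * n) (h : Flexible φ s) :
    ∃ m, ∀ b : Bool, Flexible φ (s ++ [m, if b then 1 else 0]) := by
  by_contra! hbad
  choose b hb using hbad
  simp only [Flexible, not_forall, not_exists, not_and] at hb
  choose f hf using hb
  have getD_eq (m : ℕ) (t : List ℕ) : (s ++ m :: t).getD s.length 0 = m := by simp
  let glued : List ℕ → Bool := fun u =>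
    if u.length = 2 * n + 1 then b (u.getD s.length 0) else f (u.getD s.length 0) u
  obtain ⟨τ, hτs, hτglued⟩ := h glued
  obtain ⟨m, hm⟩ : ∃ m, φ τ s.length = m := ⟨_, rfl⟩
  have hreply : τ (s ++ [m]) = b m := by
    rw [hτglued _ (List.prefix_append _ _) (by simp [hs])]
    simp [glued, hs]
  have hplay : segN (φ τ) (s ++ [m, if b m then 1 else 0]).length
      = s ++ [m, if b m then 1 else 0] := by
    have := (hobey τ).segN_two_mul_add_two n
    rw [← hs, hτs, hm, hreply] at this
    simpa [hs] using this
  obtain ⟨u, ⟨t, rfl⟩, hodd, hne⟩ := hf m τ hplay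
  refine hne ?_
  rw [hτglued _ ((List.prefix_append _ _).trans (List.prefix_append _ _)) hodd]
  simp only [glued, List.append_assoc, List.cons_append, List.nil_append, getD_eq]
  rw [if_neg (by simp; omega)]

lemma flexible_segN_of_obeysI (hobey : ∀ τ, ObeysII (φ τ) τ) {δ : ℕ → ℕ}
    (hδ : MemOmegaTwo δ) (hI : ObeysI δ (flexibleMove φ)) (n : ℕ) :
    Flexible φ (segN δ (2 * n)) := by
  induction n with
  | zero => exact flexible_nil
  | succ n ih =>
    have hmove := ih.exists_move hobey (length_segN δ _)
    rw [mul_add, mul_one, hI.segN_two_mul_add_two hδ, flexibleMove, dif_pos hmove]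
    exact hmove.choose_spec _

end Flexible

/-- Translation of anti-strategies (Theorem 9.6(ii), classically valid form):
every continuous anti-strategy for player I in `(ω×2)^ω` translates into a
strategy for player I. -/
theorem antistrategy_translates (φ : (List ℕ → Bool) → (ℕ → ℕ))
    (hcont : Continuous φ)
    (hanti : ∀ τ : List ℕ → Bool, MemOmegaTwo (φ τ) ∧ ObeysII (φ τ) τ) :
    ∃ σ : List ℕ → ℕ, ∀ δ : ℕ → ℕ,
      MemOmegaTwo δ → ObeysI δ σ → ∃ τ : List ℕ → Bool, δ = φ τ := by
  refine ⟨flexibleMove φ, fun δ hδ hI => ?_⟩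
  have hprefix (n : ℕ) : ∃ τ, ∀ i < n, φ τ i = δ i := by
    obtain ⟨τ, hτ⟩ := (flexible_segN_of_obeysI (fun τ => (hanti τ).2) hδ hI n).exists_segN_eq
    rw [length_segN, segN_eq_segN_iff] at hτ
    exact ⟨τ, fun i hi => hτ i (by omega)⟩
  obtain ⟨τ, hτ⟩ := mem_range_of_forall_exists_agree hcont hprefix
  exact ⟨τ, hτ.symm⟩
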